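/- arXiv:2110.00613 — 6 statements merged into one kernel-verified Lean document; each statement's English description precedes it below -/
import Mathlib

section
/- For all natural numbers n ≥ 1 and 1 ≤ k ≤ B, one has k^n · C(B+n−1, n) ≤ B^n · C(k+n−1, n), where C(a,b) denotes the binomial coefficient. Equivalently, the multiset-coefficient ratio C(k+n−1,n)/C(B+n−1,n) is at least the string-coefficient ratio k^n/B^n. -/
/-! Writing `C(m+n-1, n) = m(m+1)⋯(m+n-1)/n!`, the claim compares the products of the factors
`k(B+i)` and `B(k+i)` over `i < n`, and `k(B+i) ≤ B(k+i)` reduces to `ki ≤ Bi`. -/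

namespace Nat

theorem mul_add_le_mul_add {k B : ℕ} (hkB : k ≤ B) (i : ℕ) : k * (B + i) ≤ B * (k + i) := by
  have : k * i ≤ B * i := Nat.mul_le_mul_right i hkB
  linarith [Nat.mul_comm k B]

theorem pow_mul_ascFactorial_le_pow_mul_ascFactorial {k B : ℕ} (hkB : k ≤ B) (n : ℕ) :
    k ^ n * B.ascFactorial n ≤ B ^ n * k.ascFactorial n := by
  induction n with
  | zero => simp
  | succ n ih =>
    rw [ascFactorial_succ, ascFactorial_succ, pow_succ, pow_succ]
    calc k ^ n * k * ((B + n) * B.ascFactorial n)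
        = k * (B + n) * (k ^ n * B.ascFactorial n) := by ring
      _ ≤ B * (k + n) * (B ^ n * k.ascFactorial n) :=
          Nat.mul_le_mul (mul_add_le_mul_add hkB n) ih
      _ = B ^ n * B * ((k + n) * k.ascFactorial n) := by ring

end Nat

theorem multiset_ratio_ge_string_ratio_general (n k B : ℕ) (hkB : k ≤ B) :
    k ^ n * (B + n - 1).choose n ≤ B ^ n * (k + n - 1).choose n := by
  have h := Nat.pow_mul_ascFactorial_le_pow_mul_ascFactorial hkB n
  rw [Nat.ascFactorial_eq_factorial_mul_choose', Nat.ascFactorial_eq_factorial_mul_choose',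
    mul_left_comm, mul_left_comm (B ^ n)] at h
  exact Nat.le_of_mul_le_mul_left h n.factorial_pos

/-- For all natural numbers `n ≥ 1` and `1 ≤ k ≤ B`,
`k^n * C(B+n-1, n) ≤ B^n * C(k+n-1, n)`: the multiset-coefficient ratio
`C(k+n-1,n)/C(B+n-1,n)` is at least the string-coefficient ratio `k^n/B^n`. -/
theorem multiset_ratio_ge_string_ratio (n k B : ℕ) (hn : 1 ≤ n) (hk : 1 ≤ k) (hkB : k ≤ B) :
    k ^ n * (B + n - 1).choose n ≤ B ^ n * (k + n - 1).choose n :=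
  multiset_ratio_ge_string_ratio_general n k B hkB
end

section
/- For all natural numbers n ≥ 2 and 1 ≤ k < B, one has the strict inequality k^n · C(B+n−1, n) < B^n · C(k+n−1, n), where C(a,b) denotes the binomial coefficient. -/
/-!
Multiplying by `n!` turns `C(m + n - 1, n)` into the rising factorial `m (m + 1) ⋯ (m + n - 1)`,
so the claim becomes `∏ i < n, k (B + i) < ∏ i < n, B (k + i)`. Factorwise
`k (B + i) ≤ B (k + i)` amounts to `k i ≤ B i`, which is strict as soon as `i ≥ 1`;
the factor `i = 1` exists because `n ≥ 2`.
-/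

open Finset Nat

theorem Nat.mul_add_le_mul_add_s1 {k B : ℕ} (hkB : k ≤ B) (i : ℕ) : k * (B + i) ≤ B * (k + i) := by
  nlinarith

theorem Nat.mul_add_lt_mul_add {k B i : ℕ} (hkB : k < B) (hi : 0 < i) :
    k * (B + i) < B * (k + i) := by
  nlinarith

theorem Nat.pow_mul_ascFactorial_lt_pow_mul_ascFactorial {n k B : ℕ} (hn : 2 ≤ n) (hk : 0 < k)
    (hkB : k < B) : k ^ n * B.ascFactorial n < B ^ n * k.ascFactorial n := by
  have hprod : ∏ i ∈ range n, k * (B + i) < ∏ i ∈ range n, B * (k + i) :=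
    prod_lt_prod (fun i _ ↦ Nat.mul_pos hk (by omega)) (fun i _ ↦ mul_add_le_mul_add_s1 hkB.le i)
      ⟨1, mem_range.mpr hn, mul_add_lt_mul_add hkB one_pos⟩
  simpa only [ascFactorial_eq_prod_range, prod_mul_distrib, prod_const, card_range] using hprod

/-- For all natural numbers `n ≥ 2` and `1 ≤ k < B`, the strict inequality
`k^n * C(B+n-1, n) < B^n * C(k+n-1, n)` holds. -/
theorem multiset_ratio_gt_string_ratio (n k B : ℕ) (hn : 2 ≤ n) (hk : 1 ≤ k) (hkB : k < B) :
    k ^ n * (B + n - 1).choose n < B ^ n * (k + n - 1).choose n := by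
  have h := pow_mul_ascFactorial_lt_pow_mul_ascFactorial hn hk hkB
  rw [ascFactorial_eq_factorial_mul_choose', ascFactorial_eq_factorial_mul_choose',
    mul_left_comm, mul_left_comm (B ^ n)] at h
  exact Nat.lt_of_mul_lt_mul_left h
end

section
/- For all natural numbers n and 0 ≤ k ≤ B with B ≥ 1, one has C(k,n) · B^n ≤ C(B,n) · k^n, where C(a,b) denotes the binomial coefficient with C(a,b) = 0 for a < b. Equivalently, the combination-coefficient ratio C(k,n)/C(B,n) is at most the string-coefficient ratio (k/B)^n. -/
/-! Writing `C(m, n) = m(m-1)⋯(m-n+1) / n!`, the inequality compares the two falling factorials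
factor by factor: `(k - i) B ≤ (B - i) k` for every `i`, since `k ≤ B`. -/

theorem Nat.sub_mul_le_sub_mul_of_le {k B : ℕ} (i : ℕ) (hkB : k ≤ B) :
    (k - i) * B ≤ (B - i) * k := by
  rw [Nat.sub_mul, Nat.sub_mul, Nat.mul_comm k B]
  exact Nat.sub_le_sub_left (Nat.mul_le_mul_left i hkB) _

theorem Nat.descFactorial_mul_pow_le {k B : ℕ} (n : ℕ) (hkB : k ≤ B) :
    k.descFactorial n * B ^ n ≤ B.descFactorial n * k ^ n := by
  rw [Nat.descFactorial_eq_prod_range, Nat.descFactorial_eq_prod_range, Finset.pow_eq_prod_const,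
    Finset.pow_eq_prod_const, ← Finset.prod_mul_distrib, ← Finset.prod_mul_distrib]
  exact Finset.prod_le_prod' fun i _ => Nat.sub_mul_le_sub_mul_of_le i hkB

theorem comb_ratio_le_string_ratio_general (n k B : ℕ) (hkB : k ≤ B) :
    k.choose n * B ^ n ≤ B.choose n * k ^ n := by
  have hdesc := Nat.descFactorial_mul_pow_le n hkB
  rw [Nat.descFactorial_eq_factorial_mul_choose, Nat.descFactorial_eq_factorial_mul_choose,
    Nat.mul_assoc, Nat.mul_assoc] at hdesc
  exact Nat.le_of_mul_le_mul_left hdesc n.factorial_pos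

/-- For all naturals `n` and `0 ≤ k ≤ B` with `B ≥ 1`,
`C(k,n) * B^n ≤ C(B,n) * k^n`: the combination-coefficient ratio `C(k,n)/C(B,n)` is
at most the string-coefficient ratio `(k/B)^n`. -/
theorem comb_ratio_le_string_ratio (n k B : ℕ) (hB : 1 ≤ B) (hkB : k ≤ B) :
    k.choose n * B ^ n ≤ B.choose n * k ^ n :=
  comb_ratio_le_string_ratio_general n k B hkB
end

section
/- Let x : Fin B → ℝ be a nondecreasing (sorted) sequence of B real numbers, with B ≥ 1, and let 1 ≤ n ≤ B. Then ∑_{i=1}^{B} x_{(i)} · (C(i+n−1,n) − C(i+n−2,n)) / C(B+n−1,n) ≤ ∑_{i=1}^{B} x_{(i)} · (i^n − (i−1)^n) / B^n; that is, the multiset-based estimator W_n^B is pointwise at most the string-based estimator V_n^B on any sorted sample. -/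
open Finset

/-!
Both sides are expectations of the sorted sample under distributions on `{0, …, B - 1}` with
cumulative distribution functions `F k = C(k+n-1,n) / C(B+n-1,n)` (for `W`) and
`G k = (k/B)^n` (for `V`). Since `F k = ∏_{j<n} (k+j)/(B+j) ≥ (k/B)^n`, the distribution of `W`
is stochastically smaller, and Abel summation turns `G ≤ F` into the inequality between the
expectations of any nondecreasing sequence.
-/

theorem Monotone.sum_mul_sub_le_of_le {x F G : ℕ → ℝ} {B : ℕ} (hx : Monotone x)
    (h0 : F 0 = G 0) (hB : F B = G B) (hle : ∀ k ≤ B, G k ≤ F k) :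
    ∑ i ∈ range B, x i * (F (i + 1) - F i) ≤ ∑ i ∈ range B, x i * (G (i + 1) - G i) := by
  set D : ℕ → ℝ := fun k => F k - G k with hD
  have hD0 : D 0 = 0 := sub_eq_zero.2 h0
  have hDB : D B = 0 := sub_eq_zero.2 hB
  have telescope (n : ℕ) : ∑ i ∈ range n, (D i - D (i + 1)) = -D n := by
    rw [sum_range_sub', hD0, zero_sub]
  have abel : ∑ i ∈ range B, x i * (G (i + 1) - G i) - ∑ i ∈ range B, x i * (F (i + 1) - F i)
      = ∑ i ∈ range (B - 1), (x (i + 1) - x i) * D (i + 1) := by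
    calc _ = ∑ i ∈ range B, x i • (D i - D (i + 1)) := by
          rw [← sum_sub_distrib]
          exact sum_congr rfl fun i _ => by simp only [hD, smul_eq_mul]; ring
      _ = _ := by
          rw [sum_range_by_parts x (fun i => D i - D (i + 1))]
          simp only [telescope, hDB, neg_zero, smul_eq_mul, mul_zero, mul_neg, sum_neg_distrib,
            zero_sub, neg_neg]
  rw [← sub_nonneg, abel]
  refine sum_nonneg fun i hi => mul_nonneg (sub_nonneg.2 (hx i.le_succ)) (sub_nonneg.2 (hle _ ?_))
  have := mem_range.1 hi
  omega

theorem Nat.ascFactorial_mul_pow_le_of_le {k B : ℕ} (hk : k ≤ B) (m : ℕ) :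
    B.ascFactorial m * k ^ m ≤ k.ascFactorial m * B ^ m := by
  induction m with
  | zero => simp
  | succ m ih =>
    rw [Nat.ascFactorial_succ, Nat.ascFactorial_succ, pow_succ, pow_succ]
    calc (B + m) * B.ascFactorial m * (k ^ m * k)
        = ((B + m) * k) * (B.ascFactorial m * k ^ m) := by ring
      _ ≤ ((k + m) * B) * (k.ascFactorial m * B ^ m) :=
          Nat.mul_le_mul (by nlinarith [Nat.mul_le_mul_left m hk]) ih
      _ = (k + m) * k.ascFactorial m * (B ^ m * B) := by ring

theorem Nat.choose_mul_pow_le_of_le {k B : ℕ} (hk : k ≤ B) (n : ℕ) :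
    (B + n - 1).choose n * k ^ n ≤ (k + n - 1).choose n * B ^ n := by
  have h := Nat.ascFactorial_mul_pow_le_of_le hk n
  rw [Nat.ascFactorial_eq_factorial_mul_choose', Nat.ascFactorial_eq_factorial_mul_choose',
    mul_assoc, mul_assoc] at h
  exact Nat.le_of_mul_le_mul_left h n.factorial_pos

theorem pow_div_pow_le_choose_div_choose {k B : ℕ} (hB : 0 < B) (hk : k ≤ B) (n : ℕ) :
    (k : ℝ) ^ n / (B : ℝ) ^ n ≤ ((k + n - 1).choose n : ℝ) / ((B + n - 1).choose n : ℝ) := by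
  rw [div_le_div_iff₀ (by positivity) (by exact_mod_cast Nat.choose_pos (by omega)), mul_comm]
  exact_mod_cast Nat.choose_mul_pow_le_of_le hk n

theorem W_le_V_on_sorted_sample_general (B n : ℕ) (hB : 1 ≤ B) (hn : 1 ≤ n)
    (x : Fin B → ℝ) (hx : Monotone x) :
    (∑ i : Fin B, x i *
        ((((i.1 + n).choose n : ℝ) - ((i.1 + n - 1).choose n : ℝ))
          / ((B + n - 1).choose n : ℝ)))
      ≤ ∑ i : Fin B, x i *
          ((((i.1 : ℝ) + 1) ^ n - ((i.1 : ℝ)) ^ n) / (B : ℝ) ^ n) := by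
  set y : ℕ → ℝ := fun i => x ⟨min i (B - 1), by omega⟩
  have hy : Monotone y := fun a b hab => hx (Fin.mk_le_mk.2 (by omega))
  have hyx (i : Fin B) : y i = x i := congrArg x (Fin.ext (by simp only [inf_eq_left]; omega))
  set F : ℕ → ℝ := fun k => ((k + n - 1).choose n : ℝ) / ((B + n - 1).choose n : ℝ) with hF
  set G : ℕ → ℝ := fun k => (k : ℝ) ^ n / (B : ℝ) ^ n with hG
  have h0 : F 0 = G 0 := by
    simp [F, G, Nat.choose_eq_zero_of_lt (by omega : n - 1 < n), zero_pow (by omega : n ≠ 0)]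
  have hFB : F B = G B := by
    simp only [hF, hG]
    rw [div_self (by exact_mod_cast (Nat.choose_pos (by omega)).ne'),
      div_self (by positivity)]
  convert hy.sum_mul_sub_le_of_le h0 hFB fun k hk => pow_div_pow_le_choose_div_choose hB hk n
    using 1 <;> rw [← Fin.sum_univ_eq_sum_range] <;> refine sum_congr rfl fun i _ => ?_
  · simp only [hyx, hF]
    rw [show i.1 + 1 + n - 1 = i.1 + n by omega, sub_div]
  · simp only [hyx, hG]
    push_cast
    rw [sub_div]

/-- For a nondecreasing (sorted) sequence `x : Fin B → ℝ` with `B ≥ 1` and `1 ≤ n ≤ B`,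
the multiset-based estimator `W_n^B` is pointwise at most the string-based estimator
`V_n^B`.  Here the `i`-th order statistic `x_{(i)}` (for `i = 1,...,B`) is `x ⟨i-1⟩`,
`W_n^B = ∑ x_{(i)} (C(i+n-1,n) - C(i+n-2,n))/C(B+n-1,n)` and
`V_n^B = ∑ x_{(i)} (i^n - (i-1)^n)/B^n`. -/
theorem W_le_V_on_sorted_sample (B n : ℕ) (hB : 1 ≤ B) (hn : 1 ≤ n) (hnB : n ≤ B)
    (x : Fin B → ℝ) (hx : Monotone x) :
    (∑ i : Fin B, x i *
        ((((i.1 + n).choose n : ℝ) - ((i.1 + n - 1).choose n : ℝ))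
          / ((B + n - 1).choose n : ℝ)))
      ≤ ∑ i : Fin B, x i *
          ((((i.1 : ℝ) + 1) ^ n - ((i.1 : ℝ)) ^ n) / (B : ℝ) ^ n) :=
  W_le_V_on_sorted_sample_general B n hB hn x hx
end

section
/- Let X_1, ..., X_B be integrable, independent and identically distributed real-valued random variables on a probability space, B ≥ 1, and 1 ≤ n ≤ B. For each outcome, let X_{(1)} ≤ ... ≤ X_{(B)} denote the sorted values, and define W_n^B = ∑_{i=1}^B X_{(i)} (C(i+n−1,n) − C(i+n−2,n))/C(B+n−1,n) and V_n^B = ∑_{i=1}^B X_{(i)} (i^n − (i−1)^n)/B^n. Then E[W_n^B] ≤ E[V_n^B]; that is, the bias of W_n^B as an estimator of E[max(X_1,...,X_n)] is at most the bias of V_n^B. -/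
/-! For each outcome both estimators are weighted sums `∑ wᵢ X₍ᵢ₎` of the order statistics
with weights summing to `1`; the first `k` weights add up to `C(k+n-1,n) / C(B+n-1,n)` for
`W` and to `(k/B)^n` for `V`. Writing the rising factorials as products, the former dominates
the latter factor by factor, since `(k+j)/(B+j) ≥ k/B`. So `V` puts its mass on larger order
statistics, and summation by parts gives `W ≤ V` pointwise; integrate, using
`|X₍ᵢ₎| ≤ ∑ⱼ |Xⱼ|` for integrability. -/

open Finset MeasureTheory ProbabilityTheory

theorem Nat.ascFactorial_mul_pow_le_ascFactorial_mul_pow {k B : ℕ} (hkB : k ≤ B) (m : ℕ) :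
    B.ascFactorial m * k ^ m ≤ k.ascFactorial m * B ^ m := by
  simp only [Nat.ascFactorial_eq_prod_range, pow_eq_prod_const, ← prod_mul_distrib]
  exact prod_le_prod (fun _ _ => Nat.zero_le _) fun j _ => by nlinarith

theorem Nat.pow_mul_choose_le_choose_mul_pow {k B : ℕ} (hkB : k ≤ B) (n : ℕ) :
    k ^ n * (B + n - 1).choose n ≤ (k + n - 1).choose n * B ^ n := by
  refine Nat.le_of_mul_le_mul_left ?_ n.factorial_pos
  have := Nat.ascFactorial_mul_pow_le_ascFactorial_mul_pow hkB n
  rw [Nat.ascFactorial_eq_factorial_mul_choose', Nat.ascFactorial_eq_factorial_mul_choose'] at this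
  linarith

theorem sum_range_mul_le_sum_range_mul_of_partial_sums_le {R : Type*} [Ring R] [PartialOrder R]
    [IsOrderedRing R] {N : ℕ} {y w v : ℕ → R} (hy : ∀ i, i + 1 < N → y i ≤ y (i + 1))
    (hvw : ∀ k < N, ∑ i ∈ range k, v i ≤ ∑ i ∈ range k, w i)
    (htotal : ∑ i ∈ range N, v i = ∑ i ∈ range N, w i) :
    ∑ i ∈ range N, y i * w i ≤ ∑ i ∈ range N, y i * v i := by
  rw [← sub_nonneg, ← sum_sub_distrib]
  simp_rw [← mul_sub, ← smul_eq_mul (a := y _)]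
  rw [sum_range_by_parts, sum_sub_distrib, htotal, sub_self, smul_zero, zero_sub, neg_nonneg]
  refine sum_nonpos fun i hi => mul_nonpos_of_nonneg_of_nonpos ?_ ?_
  · exact sub_nonneg.2 (hy i (by rw [mem_range] at hi; omega))
  · rw [sum_sub_distrib, sub_nonpos]
    exact hvw _ (by rw [mem_range] at hi; omega)

theorem Fin.sum_mul_le_sum_mul_of_partial_sums_le {R : Type*} [Ring R] [PartialOrder R]
    [IsOrderedRing R] {N : ℕ} {y : Fin N → R} (hy : Monotone y) {w v : ℕ → R}
    (hvw : ∀ k < N, ∑ i ∈ range k, v i ≤ ∑ i ∈ range k, w i)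
    (htotal : ∑ i ∈ range N, v i = ∑ i ∈ range N, w i) :
    ∑ i : Fin N, y i * w i ≤ ∑ i : Fin N, y i * v i := by
  set z : ℕ → R := fun k => if h : k < N then y ⟨k, h⟩ else 0
  have hz : ∀ i : Fin N, y i = z i := fun i => by simp [z]
  simp only [hz, Fin.sum_univ_eq_sum_range (fun k => z k * w k),
    Fin.sum_univ_eq_sum_range (fun k => z k * v k)]
  refine sum_range_mul_le_sum_range_mul_of_partial_sums_le (fun i hi => ?_) hvw htotal
  simp only [z, dif_pos hi, dif_pos (Nat.lt_of_succ_lt hi)]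
  exact hy (Fin.mk_le_mk.2 (Nat.le_succ i))

theorem sum_range_pow_succ_sub_pow {R : Type*} [CommRing R] {n : ℕ} (hn : n ≠ 0) (k : ℕ) :
    ∑ i ∈ range k, (((i : R) + 1) ^ n - (i : R) ^ n) = (k : R) ^ n := by
  simpa [zero_pow hn] using sum_range_sub (fun i => (i : R) ^ n) k

theorem sum_range_choose_add_sub_choose {R : Type*} [CommRing R] {n : ℕ} (hn : n ≠ 0) (k : ℕ) :
    ∑ i ∈ range k, (((i + n).choose n : R) - ((i + n - 1).choose n : R))
      = ((k + n - 1).choose n : R) := by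
  have h0 : (n - 1).choose n = 0 := Nat.choose_eq_zero_of_lt (by omega)
  have hsucc : ∀ i, i + 1 + n - 1 = i + n := fun i => by omega
  simpa [h0, hsucc] using sum_range_sub (fun i => ((i + n - 1).choose n : R)) k

section OrderStatistic

variable {α : Type*} [LinearOrder α] {N : ℕ}

/-- The `i`-th smallest entry of `x`, counting from `0`, in the min–max form that makes its
continuity evident. -/
def orderStatistic (x : Fin N → α) (i : Fin N) : α :=
  (powersetCard (i + 1) (univ : Finset (Fin N))).attach.inf'
    (powersetCard_nonempty.2 (by simp [i.2])).attach fun S =>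
      S.1.sup' (card_pos.1 (by rw [(mem_powersetCard.1 S.2).2]; omega)) x

theorem orderStatistic_eq_of_monotone {x : Fin N → α} {σ : Equiv.Perm (Fin N)}
    (hx : Monotone (x ∘ σ)) (i : Fin N) : orderStatistic x i = x (σ i) := by
  apply le_antisymm
  · have hmem : (Iic i).map σ.toEmbedding ∈ powersetCard (i + 1) univ := by
      simp [mem_powersetCard]
    refine (inf'_le _ (mem_attach _ ⟨_, hmem⟩)).trans (sup'_le _ _ fun j hj => ?_)
    obtain ⟨t, ht, rfl⟩ := mem_map.1 hj
    exact hx (mem_Iic.1 ht)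
  · refine le_inf' _ _ fun S _ => ?_
    -- `S` has `i + 1` elements, so one of them sits at position `≥ i` in the sorted order
    obtain ⟨t, ht, hit⟩ : ∃ t ∈ S.1.map σ.symm.toEmbedding, i ≤ t := by
      by_contra! hlt
      have := card_le_card fun t ht => mem_Iio.2 (hlt t ht)
      rw [card_map, (mem_powersetCard.1 S.2).2, Fin.card_Iio] at this
      omega
    obtain ⟨j, hj, rfl⟩ := mem_map.1 ht
    calc x (σ i) ≤ x (σ (σ.symm j)) := hx hit
      _ = x j := by rw [Equiv.apply_symm_apply]
      _ ≤ S.1.sup' _ x := le_sup' x hj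

theorem exists_orderStatistic_eq (x : Fin N → α) (i : Fin N) : ∃ j, orderStatistic x i = x j :=
  ⟨_, orderStatistic_eq_of_monotone (Tuple.monotone_sort x) i⟩

theorem continuous_orderStatistic [TopologicalSpace α] [OrderClosedTopology α] (i : Fin N) :
    Continuous fun x : Fin N → α => orderStatistic x i :=
  Continuous.finset_inf'_apply _ fun _ _ =>
    Continuous.finset_sup'_apply _ fun j _ => continuous_apply j

end OrderStatistic

theorem integrable_orderStatistic {Ω : Type*} [MeasurableSpace Ω] {μ : Measure Ω} {N : ℕ}
    {X : Fin N → Ω → ℝ} (hX : ∀ j, Integrable (X j) μ) (i : Fin N) :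
    Integrable (fun ω => orderStatistic (fun j => X j ω) i) μ := by
  refine (integrable_finsetSum univ fun j _ => (hX j).norm).mono' ?_ (ae_of_all _ fun ω => ?_)
  · exact ((continuous_orderStatistic i).measurable.comp_aemeasurable
      (aemeasurable_pi_lambda _ fun j => (hX j).aemeasurable)).aestronglyMeasurable
  · obtain ⟨j, hj⟩ := exists_orderStatistic_eq (fun j => X j ω) i
    rw [hj]
    exact single_le_sum (f := fun j => ‖X j ω‖) (fun _ _ => norm_nonneg _) (mem_univ j)

theorem sum_mul_choose_weights_le_sum_mul_pow_weights {B n : ℕ} (hB : 1 ≤ B) (hn : 1 ≤ n)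
    {y : Fin B → ℝ} (hy : Monotone y) :
    ∑ i : Fin B, y i * ((((i.1 + n).choose n : ℝ) - ((i.1 + n - 1).choose n : ℝ))
        / ((B + n - 1).choose n : ℝ))
      ≤ ∑ i : Fin B, y i * ((((i.1 : ℝ) + 1) ^ n - ((i.1 : ℝ)) ^ n) / (B : ℝ) ^ n) := by
  have hD : (0 : ℝ) < (B + n - 1).choose n := by exact_mod_cast Nat.choose_pos (by omega)
  have hBn : (0 : ℝ) < (B : ℝ) ^ n := by positivity
  have hV : ∀ k, ∑ i ∈ range k, (((i : ℝ) + 1) ^ n - (i : ℝ) ^ n) / (B : ℝ) ^ n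
      = (k : ℝ) ^ n / (B : ℝ) ^ n := fun k => by
    rw [← sum_div, sum_range_pow_succ_sub_pow (by omega)]
  have hW : ∀ k, ∑ i ∈ range k,
      (((i + n).choose n : ℝ) - ((i + n - 1).choose n : ℝ)) / (B + n - 1).choose n
      = ((k + n - 1).choose n : ℝ) / (B + n - 1).choose n := fun k => by
    rw [← sum_div, sum_range_choose_add_sub_choose (by omega)]
  refine Fin.sum_mul_le_sum_mul_of_partial_sums_le hy
    (w := fun i => (((i + n).choose n : ℝ) - ((i + n - 1).choose n : ℝ)) / (B + n - 1).choose n)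
    (v := fun i => (((i : ℝ) + 1) ^ n - (i : ℝ) ^ n) / (B : ℝ) ^ n) (fun k hk => ?_) ?_
  · rw [hV, hW, div_le_div_iff₀ hBn hD]
    exact_mod_cast Nat.pow_mul_choose_le_choose_mul_pow hk.le n
  · rw [hV, hW, div_self hBn.ne', div_self hD.ne']

theorem expectation_W_le_expectation_V_general {Ω : Type*} [MeasurableSpace Ω]
    (μ : MeasureTheory.Measure Ω)
    {B n : ℕ} (hB : 1 ≤ B) (hn : 1 ≤ n)
    (X : Fin B → Ω → ℝ)
    (hint : ∀ i, Integrable (X i) μ)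
    (Y : Fin B → Ω → ℝ)
    (hsorted : ∀ ω, Monotone fun i => Y i ω)
    (hperm : ∀ ω, ∃ σ : Equiv.Perm (Fin B), ∀ i, Y i ω = X (σ i) ω) :
    (∫ ω, ∑ i : Fin B, Y i ω *
        ((((i.1 + n).choose n : ℝ) - ((i.1 + n - 1).choose n : ℝ))
          / ((B + n - 1).choose n : ℝ)) ∂μ)
      ≤ ∫ ω, ∑ i : Fin B, Y i ω *
          ((((i.1 : ℝ) + 1) ^ n - ((i.1 : ℝ)) ^ n) / (B : ℝ) ^ n) ∂μ := by
  have hY : ∀ i, Y i = fun ω => orderStatistic (fun j => X j ω) i := fun i => funext fun ω => by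
    obtain ⟨σ, hσ⟩ := hperm ω
    have hmono : Monotone ((fun j => X j ω) ∘ σ) :=
      (funext hσ : _ = (fun j => X j ω) ∘ σ) ▸ hsorted ω
    rw [hσ, orderStatistic_eq_of_monotone hmono]
  have hYint : ∀ i, Integrable (Y i) μ := fun i => hY i ▸ integrable_orderStatistic hint i
  exact integral_mono (integrable_finsetSum _ fun i _ => (hYint i).mul_const _)
    (integrable_finsetSum _ fun i _ => (hYint i).mul_const _)
    fun ω => sum_mul_choose_weights_le_sum_mul_pow_weights hB hn (hsorted ω)

/-- Let `X 0, ..., X (B-1)` be integrable, i.i.d. real random variables on a probability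
space, `B ≥ 1`, `1 ≤ n ≤ B`, and let `Y` give, for each outcome, the sorted values
(order statistics) of the `X i`.  With
`W_n^B = ∑_{i=1}^B X_{(i)} (C(i+n-1,n) - C(i+n-2,n))/C(B+n-1,n)` and
`V_n^B = ∑_{i=1}^B X_{(i)} (i^n - (i-1)^n)/B^n`, we have `E[W_n^B] ≤ E[V_n^B]`:
the (nonpositive) bias of `W_n^B` as an estimator of `E[max(X_1,...,X_n)]` is at most
the bias of `V_n^B`. -/
theorem expectation_W_le_expectation_V {Ω : Type*} [MeasurableSpace Ω]
    (μ : MeasureTheory.Measure Ω) [IsProbabilityMeasure μ]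
    {B n : ℕ} (hB : 1 ≤ B) (hn : 1 ≤ n) (hnB : n ≤ B)
    (X : Fin B → Ω → ℝ)
    (hmeas : ∀ i, Measurable (X i))
    (hint : ∀ i, Integrable (X i) μ)
    (hindep : iIndepFun X μ)
    (hident : ∀ i j, IdentDistrib (X i) (X j) μ μ)
    (Y : Fin B → Ω → ℝ)
    (hsorted : ∀ ω, Monotone fun i => Y i ω)
    (hperm : ∀ ω, ∃ σ : Equiv.Perm (Fin B), ∀ i, Y i ω = X (σ i) ω) :
    (∫ ω, ∑ i : Fin B, Y i ω *
        ((((i.1 + n).choose n : ℝ) - ((i.1 + n - 1).choose n : ℝ))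
          / ((B + n - 1).choose n : ℝ)) ∂μ)
      ≤ ∫ ω, ∑ i : Fin B, Y i ω *
          ((((i.1 : ℝ) + 1) ^ n - ((i.1 : ℝ)) ^ n) / (B : ℝ) ^ n) ∂μ :=
  expectation_W_le_expectation_V_general μ hB hn X hint Y hsorted hperm
end

section
/- Let X_1, ..., X_B be integrable, independent and identically distributed real-valued random variables on a probability space, B ≥ 1, and 1 ≤ n ≤ B. For each outcome, let X_{(1)} ≤ ... ≤ X_{(B)} denote the sorted values, and define V_n^B = ∑_{i=1}^B X_{(i)} (i^n − (i−1)^n)/B^n. Then E[V_n^B] ≤ E[max(X_1,...,X_n)]; that is, V_n^B has nonpositive bias as an estimator of the expected maximum of n draws. -/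
open Finset MeasureTheory ProbabilityTheory

/-!
Averaging `max_j X (f j)` over all `B ^ n` maps `f : Fin n → Fin B` gives a quantity that sorting
does not change, and exactly `i ^ n - (i - 1) ^ n` of these maps have as largest value the `i`-th
smallest sample, so `V_n^B` is this average. For each `f`, the maximum over the indices hit by `f`
is at most the maximum over `n` distinct indices containing them, and by independence and identical
distribution the latter has expectation `E[max(X_1, …, X_n)]`.
-/

theorem Finset.card_filter_univ_sup'_eq {ι α : Type*} [Fintype ι] [DecidableEq ι]
    [LinearOrder α] [Fintype α] [LocallyFiniteOrderBot α] (hι : (univ : Finset ι).Nonempty)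
    (a : α) :
    #{f : ι → α | univ.sup' hι f = a} =
      #(Iic a) ^ Fintype.card ι - #(Iio a) ^ Fintype.card ι := by
  have hfiber : ({f : ι → α | univ.sup' hι f = a} : Finset (ι → α)) =
      Fintype.piFinset (fun _ => Iic a) \ Fintype.piFinset (fun _ => Iio a) := by
    ext f
    simp [eq_iff_le_not_lt, sup'_le_iff, sup'_lt_iff, Fintype.mem_piFinset]
  rw [hfiber, card_sdiff_of_subset (Fintype.piFinset_subset _ _ fun _ => Iio_subset_Iic_self),
    Fintype.card_piFinset, Fintype.card_piFinset, prod_const, prod_const, card_univ]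

theorem Fin.sum_univ_sup'_comp_of_monotone {ι : Type*} [Fintype ι] [DecidableEq ι] {B : ℕ}
    (hι : (univ : Finset ι).Nonempty) {y : Fin B → ℝ} (hy : Monotone y) :
    ∑ f : ι → Fin B, univ.sup' hι (fun j => y (f j)) =
      ∑ i : Fin B, (((i : ℝ) + 1) ^ Fintype.card ι - (i : ℝ) ^ Fintype.card ι) * y i := by
  have hmono : ∀ f : ι → Fin B, univ.sup' hι (fun j => y (f j)) = y (univ.sup' hι f) :=
    fun f => (apply_sup'_eq_sup'_comp hι y hy.map_sup).symm
  simp only [hmono]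
  rw [← sum_fiberwise' univ (fun f : ι → Fin B => univ.sup' hι f) y]
  refine sum_congr rfl fun i _ => ?_
  rw [Finset.sum_const, card_filter_univ_sup'_eq, Fin.card_Iic, Fin.card_Iio, nsmul_eq_mul,
    Nat.cast_sub (Nat.pow_le_pow_left i.val.le_succ _)]
  push_cast
  ring

theorem Finset.sum_univ_sup'_comp_perm {ι α : Type*} [Fintype ι] [DecidableEq ι] [Fintype α]
    (hι : (univ : Finset ι).Nonempty) (x : α → ℝ) (σ : Equiv.Perm α) :
    ∑ f : ι → α, univ.sup' hι (fun j => x (σ (f j))) =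
      ∑ f : ι → α, univ.sup' hι (fun j => x (f j)) :=
  Fintype.sum_equiv ((Equiv.refl ι).arrowCongr σ) _ _ fun _ => rfl

theorem Fin.sum_mul_of_sorted_eq_sum_univ_sup' {ι : Type*} [Fintype ι] [DecidableEq ι] {B : ℕ}
    (hι : (univ : Finset ι).Nonempty) {x y : Fin B → ℝ} (hy : Monotone y)
    (σ : Equiv.Perm (Fin B)) (hσ : ∀ i, y i = x (σ i)) :
    ∑ i : Fin B, (((i : ℝ) + 1) ^ Fintype.card ι - (i : ℝ) ^ Fintype.card ι) * y i =
      ∑ f : ι → Fin B, univ.sup' hι (fun j => x (f j)) := by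
  rw [← Fin.sum_univ_sup'_comp_of_monotone hι hy]
  simp only [hσ]
  exact sum_univ_sup'_comp_perm hι x σ

theorem Function.exists_embedding_range_superset {κ ι : Type*} [Fintype κ] [Fintype ι]
    (f : κ → ι) (hcard : Fintype.card κ ≤ Fintype.card ι) :
    ∃ g : κ ↪ ι, Set.range f ⊆ Set.range g := by
  classical
  obtain ⟨t, hft, -, ht⟩ := exists_subsuperset_card_eq (subset_univ (univ.image f))
    (card_image_le.trans_eq card_univ) (by simpa using hcard)
  let e : κ ≃ t := Fintype.equivOfCardEq (by simp [ht])
  refine ⟨e.toEmbedding.trans (Function.Embedding.subtype _), ?_⟩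
  rintro _ ⟨k, rfl⟩
  exact ⟨e.symm ⟨f k, hft (mem_image_of_mem f (mem_univ k))⟩, by simp⟩

section

variable {Ω : Type*} [MeasurableSpace Ω] {μ : Measure Ω}

theorem MeasureTheory.Integrable.finset_sup' {ι : Type*} {s : Finset ι} (hs : s.Nonempty)
    {f : ι → Ω → ℝ} (hf : ∀ i ∈ s, Integrable (f i) μ) :
    Integrable (fun ω => s.sup' hs fun i => f i ω) μ := by
  simpa only [← Finset.sup'_apply] using
    sup'_induction (p := fun g : Ω → ℝ => Integrable g μ) hs f (fun _ hf _ hg => hf.sup hg) hf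

theorem ProbabilityTheory.iIndepFun.identDistrib_comp_of_injective [IsProbabilityMeasure μ]
    {ι κ β : Type*} [Fintype κ] [MeasurableSpace β] {X : ι → Ω → β} (hX : iIndepFun X μ)
    (hident : ∀ i j, IdentDistrib (X i) (X j) μ μ) {g h : κ → ι}
    (hg : Function.Injective g) (hh : Function.Injective h) :
    IdentDistrib (fun ω k => X (g k) ω) (fun ω k => X (h k) ω) μ μ := by
  have hae : ∀ i, AEMeasurable (X i) μ := fun i => (hident i i).aemeasurable_fst
  refine ⟨aemeasurable_pi_lambda _ fun k => hae _, aemeasurable_pi_lambda _ fun k => hae _, ?_⟩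
  rw [(hX.precomp hg).map_fun_eq_pi_map fun k => hae _,
    (hX.precomp hh).map_fun_eq_pi_map fun k => hae _]
  congr with k : 1
  exact (hident _ _).map_eq

theorem ProbabilityTheory.iIndepFun.integral_sup'_comp_le [IsProbabilityMeasure μ]
    {ι κ : Type*} [Fintype ι] [Fintype κ] (hκ : (univ : Finset κ).Nonempty) {X : ι → Ω → ℝ}
    (hX : iIndepFun X μ) (hident : ∀ i j, IdentDistrib (X i) (X j) μ μ)
    (hint : ∀ i, Integrable (X i) μ) (f : κ → ι) {g : κ → ι} (hg : Function.Injective g) :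
    ∫ ω, univ.sup' hκ (fun k => X (f k) ω) ∂μ ≤ ∫ ω, univ.sup' hκ (fun k => X (g k) ω) ∂μ := by
  obtain ⟨h, hfh⟩ := Function.exists_embedding_range_superset f
    (Fintype.card_le_of_injective g hg)
  have hle : ∀ ω, univ.sup' hκ (fun k => X (f k) ω) ≤ univ.sup' hκ (fun k => X (h k) ω) := by
    intro ω
    refine sup'_le hκ _ fun k _ => ?_
    obtain ⟨k', hk'⟩ := hfh ⟨k, rfl⟩
    rw [← hk']
    exact le_sup' (fun k => X (h k) ω) (mem_univ k')
  have hmax : Measurable fun v : κ → ℝ => univ.sup' hκ fun k => v k := by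
    convert measurable_sup' hκ (f := fun k (v : κ → ℝ) => v k) fun k _ => measurable_pi_apply k
      using 1
    ext v
    exact (Finset.sup'_apply hκ (fun k (v : κ → ℝ) => v k) v).symm
  calc ∫ ω, univ.sup' hκ (fun k => X (f k) ω) ∂μ
      ≤ ∫ ω, univ.sup' hκ (fun k => X (h k) ω) ∂μ :=
        integral_mono (.finset_sup' hκ fun k _ => hint _) (.finset_sup' hκ fun k _ => hint _) hle
    _ = ∫ ω, univ.sup' hκ (fun k => X (g k) ω) ∂μ :=
        ((hX.identDistrib_comp_of_injective hident h.injective hg).comp hmax).integral_eq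

end

theorem V_has_nonpositive_bias_general {Ω : Type*} [MeasurableSpace Ω]
    (μ : MeasureTheory.Measure Ω) [IsProbabilityMeasure μ]
    {B n : ℕ} (hn : 1 ≤ n) (hnB : n ≤ B)
    (X : Fin B → Ω → ℝ)
    (hint : ∀ i, Integrable (X i) μ)
    (hindep : iIndepFun X μ)
    (hident : ∀ i j, IdentDistrib (X i) (X j) μ μ)
    (Y : Fin B → Ω → ℝ)
    (hsorted : ∀ ω, Monotone fun i => Y i ω)
    (hperm : ∀ ω, ∃ σ : Equiv.Perm (Fin B), ∀ i, Y i ω = X (σ i) ω) :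
    (∫ ω, ∑ i : Fin B, Y i ω *
        ((((i.1 : ℝ) + 1) ^ n - ((i.1 : ℝ)) ^ n) / (B : ℝ) ^ n) ∂μ)
      ≤ ∫ ω, Finset.univ.sup'
          (Finset.univ_nonempty_iff.mpr (Fin.pos_iff_nonempty.mp hn))
          (fun i : Fin n => X (Fin.castLE hnB i) ω) ∂μ := by
  set hκ := univ_nonempty_iff.mpr (Fin.pos_iff_nonempty.mp hn)
  have hV : ∀ ω, ∑ i : Fin B, Y i ω * ((((i.1 : ℝ) + 1) ^ n - ((i.1 : ℝ)) ^ n) / (B : ℝ) ^ n)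
      = (∑ f : Fin n → Fin B, univ.sup' hκ fun j => X (f j) ω) / (B : ℝ) ^ n := by
    intro ω
    obtain ⟨σ, hσ⟩ := hperm ω
    rw [← Fin.sum_mul_of_sorted_eq_sum_univ_sup' hκ (x := fun i => X i ω) (hsorted ω) σ hσ,
      Fintype.card_fin, sum_div]
    exact sum_congr rfl fun i _ => by ring
  have hBn : (B : ℝ) ^ n ≠ 0 := pow_ne_zero _ (Nat.cast_ne_zero.mpr (by omega))
  calc _ = ∫ ω, (∑ f : Fin n → Fin B, univ.sup' hκ fun j => X (f j) ω) / (B : ℝ) ^ n ∂μ :=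
        integral_congr_ae (.of_forall hV)
    _ = (∑ f : Fin n → Fin B, ∫ ω, univ.sup' hκ (fun j => X (f j) ω) ∂μ) / (B : ℝ) ^ n := by
        rw [integral_div, integral_finsetSum _ fun f _ => .finset_sup' hκ fun j _ => hint _]
    _ ≤ (∑ _f : Fin n → Fin B, ∫ ω, univ.sup' hκ (fun j => X (Fin.castLE hnB j) ω) ∂μ) /
          (B : ℝ) ^ n := by
        refine div_le_div_of_nonneg_right (sum_le_sum fun f _ => ?_) (by positivity)
        exact hindep.integral_sup'_comp_le hκ hident hint f (Fin.castLE_injective hnB)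
    _ = _ := by
        rw [Finset.sum_const, card_univ, Fintype.card_fun, Fintype.card_fin, Fintype.card_fin,
          nsmul_eq_mul, Nat.cast_pow, mul_div_cancel_left₀ _ hBn]

/-- Let `X 0, ..., X (B-1)` be integrable, i.i.d. real random variables on a probability
space, `B ≥ 1`, `1 ≤ n ≤ B`, and let `Y` give, for each outcome, the sorted values
(order statistics) of the `X i`.  With
`V_n^B = ∑_{i=1}^B X_{(i)} (i^n - (i-1)^n)/B^n`, we have
`E[V_n^B] ≤ E[max(X_1,...,X_n)]`: the estimator `V_n^B` has nonpositive bias for the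
expected maximum of `n` draws. -/
theorem V_has_nonpositive_bias {Ω : Type*} [MeasurableSpace Ω]
    (μ : MeasureTheory.Measure Ω) [IsProbabilityMeasure μ]
    {B n : ℕ} (hB : 1 ≤ B) (hn : 1 ≤ n) (hnB : n ≤ B)
    (X : Fin B → Ω → ℝ)
    (hmeas : ∀ i, Measurable (X i))
    (hint : ∀ i, Integrable (X i) μ)
    (hindep : iIndepFun X μ)
    (hident : ∀ i j, IdentDistrib (X i) (X j) μ μ)
    (Y : Fin B → Ω → ℝ)
    (hsorted : ∀ ω, Monotone fun i => Y i ω)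
    (hperm : ∀ ω, ∃ σ : Equiv.Perm (Fin B), ∀ i, Y i ω = X (σ i) ω) :
    (∫ ω, ∑ i : Fin B, Y i ω *
        ((((i.1 : ℝ) + 1) ^ n - ((i.1 : ℝ)) ^ n) / (B : ℝ) ^ n) ∂μ)
      ≤ ∫ ω, Finset.univ.sup'
          (Finset.univ_nonempty_iff.mpr (Fin.pos_iff_nonempty.mp hn))
          (fun i : Fin n => X (Fin.castLE hnB i) ω) ∂μ :=
  V_has_nonpositive_bias_general μ hn hnB X hint hindep hident Y hsorted hperm
end
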